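/- arXiv:2412.19792 — 7 statements merged into one kernel-verified Lean document; each statement's English description precedes it below -/
import Mathlib

section
/- Let Y be a nonempty finite type, π₀ a policy with π₀(y) > 0 for all y, r : Y → ℝ, and β > 0. Let T : ℝ^Y → ℝ^Y be differentiable on an open neighborhood of Δ_Y and map Δ_Y into Δ_Y, and define the inference-time win rate W^T(π) := Σ_{y,z} w_r(y,z)·(Tπ)(y)·(Tπ₀)(z). If π* maximizes π ↦ W^T(π) − β·KL(π‖π₀) over Δ_Y and π*(y) > 0 for all y, then, setting R(y) := ∂W^T(π)/∂π(y)|_{π=π*} = Σ_z C^{Tπ₀}(z)·(∂(Tπ)(z)/∂π(y))|_{π=π*}, where C^{Tπ₀}(z) := Σ_{z'} w_r(z,z')·(Tπ₀)(z'), the optimal policy satisfies π*(y) = π₀(y)·e^{R(y)/β} / Σ_z π₀(z)·e^{R(z)/β} for all y. -/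
/-!
The win rate is linear in `Tπ`: `W π = ∑ z, C z * T π z`, so by the chain rule its partial
derivative in the coordinate `y` at `π*` is `R y`, while that of `∑ π log (π / π₀)` is
`log (π* y / π₀ y) + 1`. Because `π*` has full support, one can move a little mass from `b` to `a`
or from `a` to `b` without leaving the simplex, so the derivative of the objective along
`e_a - e_b` vanishes. Hence `R y - β log (π* y / π₀ y)` does not depend on `y`, that is, `π*` is
proportional to `π₀ · exp (R / β)`, and the normalisation `∑ π* = 1` fixes the constant.
-/

open Finset

section

open Real

lemma hasDerivAt_mul_log_div {x q : ℝ} (hx : x ≠ 0) (hq : q ≠ 0) :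
    HasDerivAt (fun x => x * log (x / q)) (log (x / q) + 1) x := by
  have hlog := ((hasDerivAt_id' x).div_const q).log (div_ne_zero hx hq)
  refine ((hasDerivAt_id' x).mul hlog).congr_deriv ?_
  field_simp

variable {Y : Type*} [Fintype Y]

lemma hasFDerivAt_sum_mul_log_div {p q : Y → ℝ} (hp : ∀ y, p y ≠ 0) (hq : ∀ y, q y ≠ 0) :
    HasFDerivAt (fun x : Y → ℝ => ∑ y, x y * log (x y / q y))
      (∑ y, (log (p y / q y) + 1) • (ContinuousLinearMap.proj y : (Y → ℝ) →L[ℝ] ℝ)) p :=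
  HasFDerivAt.fun_sum fun y _ =>
    (hasDerivAt_mul_log_div (hp y) (hq y)).comp_hasFDerivAt (f := fun x : Y → ℝ => x y) p
      (hasFDerivAt_apply y p)

lemma eq_div_sum_of_eq_const_mul {p g : Y → ℝ} {c : ℝ} (h : ∀ y, p y = c * g y)
    (hp : ∑ y, p y = 1) (y : Y) : p y = g y / ∑ z, g z := by
  have hc : c * ∑ z, g z = 1 := by
    rw [mul_sum, ← hp]
    exact sum_congr rfl fun z _ => (h z).symm
  rw [h, eq_div_iff (right_ne_zero_of_mul_eq_one hc)]
  linear_combination g y * hc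

lemma eq_mul_exp_div_sum_of_sub_mul_log_div_eq {p q f : Y → ℝ} {β : ℝ} (hp : ∀ y, 0 < p y)
    (hq : ∀ y, 0 < q y) (hβ : β ≠ 0) (hsum : ∑ y, p y = 1)
    (h : ∀ a b, f a - β * log (p a / q a) = f b - β * log (p b / q b)) (y : Y) :
    p y = q y * exp (f y / β) / ∑ z, q z * exp (f z / β) := by
  refine eq_div_sum_of_eq_const_mul (c := exp (-(f y - β * log (p y / q y)) / β))
    (g := fun z => q z * exp (f z / β)) (fun z => ?_) hsum y
  have hexp : -(f z - β * log (p z / q z)) / β + f z / β = log (p z / q z) := by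
    field_simp
    ring
  rw [← h z y, mul_left_comm, ← exp_add, hexp, exp_log (div_pos (hp z) (hq z)),
    mul_div_cancel₀ _ (hq z).ne']

variable [DecidableEq Y]

lemma add_smul_single_sub_single_mem_stdSimplex {p : Y → ℝ} (hp : p ∈ stdSimplex ℝ Y)
    {a b : Y} {t : ℝ} (ha : -p a ≤ t) (hb : t ≤ p b) :
    p + t • (Pi.single a 1 - Pi.single b 1) ∈ stdSimplex ℝ Y := by
  refine ⟨fun y => ?_, ?_⟩
  · have := hp.1 y
    simp only [Pi.add_apply, Pi.smul_apply, Pi.sub_apply, Pi.single_apply, smul_eq_mul]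
    split_ifs <;> subst_vars <;> linarith
  · simp [sum_add_distrib, ← mul_sum, sum_sub_distrib, hp.2]

lemma apply_single_eq_of_isMaxOn_stdSimplex {F : (Y → ℝ) → ℝ} {F' : (Y → ℝ) →L[ℝ] ℝ}
    {p : Y → ℝ} (hF : HasFDerivAt F F' p) (hmax : IsMaxOn F (stdSimplex ℝ Y) p)
    (hp : p ∈ stdSimplex ℝ Y) {a b : Y} (ha : 0 < p a) (hb : 0 < p b) :
    F' (Pi.single a 1) = F' (Pi.single b 1) := by
  set v : Y → ℝ := Pi.single a 1 - Pi.single b 1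
  set ε := min (p a) (p b)
  have hε : 0 < ε := lt_min ha hb
  have hcone : ∀ t : ℝ, |t| ≤ ε → t • v ∈ posTangentConeAt (stdSimplex ℝ Y) p := by
    intro t ht
    rw [abs_le] at ht
    refine mem_posTangentConeAt_of_segment_subset
      ((convex_stdSimplex ℝ Y).segment_subset hp
        (add_smul_single_sub_single_mem_stdSimplex hp ?_ ?_))
    · linarith [min_le_left (p a) (p b)]
    · linarith [min_le_right (p a) (p b)]
  have hneg : -(ε • v) ∈ posTangentConeAt (stdSimplex ℝ Y) p := by
    simpa [neg_smul] using hcone (-ε) (by simp [abs_of_pos hε])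
  have hzero : F' (ε • v) = 0 :=
    hmax.localize.hasFDerivWithinAt_eq_zero hF.hasFDerivWithinAt
      (hcone ε (abs_of_pos hε).le) hneg
  rw [map_smul, smul_eq_mul, mul_eq_zero, map_sub, sub_eq_zero] at hzero
  exact hzero.resolve_left hε.ne'

end

theorem stmt_2_general {Y : Type*} [Fintype Y] [DecidableEq Y]
    (π₀ : Y → ℝ) (hπ₀pos : ∀ y, 0 < π₀ y)
    (β : ℝ) (hβ : 0 < β)
    (T : (Y → ℝ) → (Y → ℝ))
    (Δ : Set (Y → ℝ)) (hΔ : Δ = {π | (∀ y, 0 ≤ π y) ∧ ∑ y, π y = 1})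
    (U : Set (Y → ℝ)) (hU : IsOpen U) (hΔU : Δ ⊆ U)
    (hTdiff : DifferentiableOn ℝ T U)
    (w : Y → Y → ℝ)
    (W : (Y → ℝ) → ℝ)
    (hW : ∀ π, W π = ∑ y, ∑ z, w y z * T π y * T π₀ z)
    (πstar : Y → ℝ) (hπstarΔ : πstar ∈ Δ) (hπstar_pos : ∀ y, 0 < πstar y)
    (hmax : ∀ π ∈ Δ,
      W π - β * (∑ y, π y * Real.log (π y / π₀ y))
        ≤ W πstar - β * (∑ y, πstar y * Real.log (πstar y / π₀ y)))
    (C : Y → ℝ) (hC : ∀ z, C z = ∑ z', w z z' * T π₀ z')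
    (R : Y → ℝ)
    (hR : ∀ y, R y = ∑ z, C z * fderiv ℝ T πstar (Pi.single y 1) z) :
    ∀ y, πstar y = π₀ y * Real.exp (R y / β) / ∑ z, π₀ z * Real.exp (R z / β) := by
  subst hΔ
  have hT : HasFDerivAt T (fderiv ℝ T πstar) πstar :=
    (hTdiff.differentiableAt (hU.mem_nhds (hΔU hπstarΔ))).hasFDerivAt
  have hWC : W = fun π => ∑ z, C z * T π z := funext fun π => by
    rw [hW]
    refine sum_congr rfl fun y _ => ?_
    rw [hC, sum_mul]
    exact sum_congr rfl fun z _ => by ring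
  have hW' : HasFDerivAt W
      (∑ z, C z • (ContinuousLinearMap.proj z).comp (fderiv ℝ T πstar)) πstar := by
    rw [hWC]
    exact HasFDerivAt.fun_sum fun z _ => (hasFDerivAt_pi'.1 hT z).const_mul (C z)
  have hKL := hasFDerivAt_sum_mul_log_div (fun y => (hπstar_pos y).ne') (fun y => (hπ₀pos y).ne')
  have hcrit : ∀ a b, R a - β * (Real.log (πstar a / π₀ a) + 1)
      = R b - β * (Real.log (πstar b / π₀ b) + 1) := fun a b => by
    simpa [hR, Pi.single_apply] using apply_single_eq_of_isMaxOn_stdSimplex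
      (hW'.sub (hKL.const_mul β)) (isMaxOn_iff.2 hmax) hπstarΔ (hπstar_pos a) (hπstar_pos b)
  exact eq_mul_exp_div_sum_of_sub_mul_log_div_eq hπstar_pos hπ₀pos hβ.ne' hπstarΔ.2
    fun a b => by linarith [hcrit a b]

/-- Let `T : ℝ^Y → ℝ^Y` be differentiable on an open neighborhood `U` of the
simplex `Δ` and map `Δ` into `Δ`. If `π*` (with full support) maximizes the KL-regularized
inference-time win rate over `Δ`, then with
`R(y) := Σ_z C^{Tπ₀}(z) · ∂(Tπ)(z)/∂π(y) |_{π=π*}` (where `C^{Tπ₀}(z) = Σ_{z'} w_r(z,z')·(Tπ₀)(z')`),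
the optimal policy is the Gibbs policy: `π*(y) = π₀(y)e^{R(y)/β} / Σ_z π₀(z)e^{R(z)/β}`. -/
theorem stmt_2 {Y : Type*} [Fintype Y] [Nonempty Y] [DecidableEq Y]
    (π₀ : Y → ℝ) (hπ₀pos : ∀ y, 0 < π₀ y) (hπ₀sum : ∑ y, π₀ y = 1)
    (r : Y → ℝ) (β : ℝ) (hβ : 0 < β)
    (T : (Y → ℝ) → (Y → ℝ))
    (Δ : Set (Y → ℝ)) (hΔ : Δ = {π | (∀ y, 0 ≤ π y) ∧ ∑ y, π y = 1})
    (U : Set (Y → ℝ)) (hU : IsOpen U) (hΔU : Δ ⊆ U)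
    (hTdiff : DifferentiableOn ℝ T U)
    (hTΔ : ∀ π ∈ Δ, T π ∈ Δ)
    (w : Y → Y → ℝ)
    (hw : ∀ y z, w y z =
      (if r z < r y then (1 : ℝ) else 0) + (if r y = r z then 1 / 2 else 0))
    (W : (Y → ℝ) → ℝ)
    (hW : ∀ π, W π = ∑ y, ∑ z, w y z * T π y * T π₀ z)
    (πstar : Y → ℝ) (hπstarΔ : πstar ∈ Δ) (hπstar_pos : ∀ y, 0 < πstar y)
    (hmax : ∀ π ∈ Δ,
      W π - β * (∑ y, π y * Real.log (π y / π₀ y))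
        ≤ W πstar - β * (∑ y, πstar y * Real.log (πstar y / π₀ y)))
    (C : Y → ℝ) (hC : ∀ z, C z = ∑ z', w z z' * T π₀ z')
    (R : Y → ℝ)
    (hR : ∀ y, R y = ∑ z, C z * fderiv ℝ T πstar (Pi.single y 1) z) :
    ∀ y, πstar y = π₀ y * Real.exp (R y / β) / ∑ z, π₀ z * Real.exp (R z / β) :=
  stmt_2_general π₀ hπ₀pos β hβ T Δ hΔ U hU hΔU hTdiff w W hW πstar hπstarΔ hπstar_pos hmax C hC R
    hR
end

section
/- Let Y be a nonempty finite type, π₀ a policy with π₀(y) > 0 for all y, r : Y → ℝ, and β > 0. Define the calibrated reward C(y) := Σ_z π₀(z)·w_r(y,z) and the policy π*(y) := π₀(y)·e^{C(y)/β} / Σ_z π₀(z)·e^{C(z)/β}. Then π* is the unique maximizer over all policies π of the KL-regularized win-rate objective W_r(π ≻ π₀) − β·KL(π‖π₀), where W_r(π ≻ π₀) := Σ_{y,z} w_r(y,z)·π(y)·π₀(z). -/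
/-!
Writing `Z = ∑ z, π₀ z * exp (C z / β)` and `π*` for the Gibbs policy, one has the identity
`W_r(π ≻ π₀) - β KL(π‖π₀) = β log Z - β KL(π‖π*)` for every policy `π`, because
`W_r(π ≻ π₀) = ∑ y, π y * C y` and `log (π* y / π₀ y) = C y / β - log Z`.
The theorem is then Gibbs' inequality `KL(π‖π*) ≥ 0`, with equality exactly when `π = π*`.
-/

open InformationTheory

section Gibbs

variable {Y : Type*} [Fintype Y]

lemma mul_log_div_eq_mul_klFun_add_sub {p q : ℝ} (hq : q ≠ 0) :
    p * Real.log (p / q) = q * klFun (p / q) + p - q := by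
  rw [klFun_apply]
  field_simp
  ring

-- Rewriting each term through `klFun` turns the sum into one of nonnegative terms.
lemma sum_mul_log_div_eq_sum_mul_klFun {p q : Y → ℝ} (hq : ∀ y, 0 < q y)
    (hsum : ∑ y, p y = ∑ y, q y) :
    ∑ y, p y * Real.log (p y / q y) = ∑ y, q y * klFun (p y / q y) := by
  simp only [mul_log_div_eq_mul_klFun_add_sub (hq _).ne', Finset.sum_sub_distrib,
    Finset.sum_add_distrib, hsum, add_sub_cancel_right]

lemma sum_mul_log_div_nonneg {p q : Y → ℝ} (hp : ∀ y, 0 ≤ p y) (hq : ∀ y, 0 < q y)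
    (hsum : ∑ y, p y = ∑ y, q y) :
    0 ≤ ∑ y, p y * Real.log (p y / q y) := by
  rw [sum_mul_log_div_eq_sum_mul_klFun hq hsum]
  exact Finset.sum_nonneg fun y _ =>
    mul_nonneg (hq y).le (klFun_nonneg (div_nonneg (hp y) (hq y).le))

lemma sum_mul_log_div_eq_zero_iff {p q : Y → ℝ} (hp : ∀ y, 0 ≤ p y) (hq : ∀ y, 0 < q y)
    (hsum : ∑ y, p y = ∑ y, q y) :
    ∑ y, p y * Real.log (p y / q y) = 0 ↔ p = q := by
  have hterm : ∀ y, 0 ≤ q y * klFun (p y / q y) := fun y =>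
    mul_nonneg (hq y).le (klFun_nonneg (div_nonneg (hp y) (hq y).le))
  rw [sum_mul_log_div_eq_sum_mul_klFun hq hsum,
    Finset.sum_eq_zero_iff_of_nonneg fun y _ => hterm y, funext_iff]
  simp only [Finset.mem_univ, forall_const]
  refine forall_congr' fun y => ?_
  rw [mul_eq_zero, or_iff_right (hq y).ne',
    klFun_eq_zero_iff (div_nonneg (hp y) (hq y).le), div_eq_one_iff_eq (hq y).ne']

end Gibbs

section GibbsPolicy

variable {Y : Type*} [Fintype Y]

noncomputable def gibbsPolicy (π₀ f : Y → ℝ) (y : Y) : ℝ :=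
  π₀ y * Real.exp (f y) / ∑ z, π₀ z * Real.exp (f z)

variable [Nonempty Y] {π₀ : Y → ℝ} (hπ₀ : ∀ y, 0 < π₀ y) (f : Y → ℝ)
include hπ₀

lemma sum_mul_exp_pos : 0 < ∑ z, π₀ z * Real.exp (f z) :=
  Finset.sum_pos (fun z _ => mul_pos (hπ₀ z) (Real.exp_pos _)) Finset.univ_nonempty

lemma gibbsPolicy_pos (y : Y) : 0 < gibbsPolicy π₀ f y :=
  div_pos (mul_pos (hπ₀ y) (Real.exp_pos _)) (sum_mul_exp_pos hπ₀ f)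

lemma sum_gibbsPolicy : ∑ y, gibbsPolicy π₀ f y = 1 := by
  simp only [gibbsPolicy, ← Finset.sum_div]
  exact div_self (sum_mul_exp_pos hπ₀ f).ne'

lemma log_gibbsPolicy_div (y : Y) :
    Real.log (gibbsPolicy π₀ f y / π₀ y) = f y - Real.log (∑ z, π₀ z * Real.exp (f z)) := by
  have hZ := (sum_mul_exp_pos hπ₀ f).ne'
  have hratio : gibbsPolicy π₀ f y / π₀ y = Real.exp (f y) / ∑ z, π₀ z * Real.exp (f z) := by
    rw [gibbsPolicy]
    field_simp [(hπ₀ y).ne']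
  rw [hratio, Real.log_div (Real.exp_ne_zero _) hZ, Real.log_exp]

-- The Gibbs variational (Donsker–Varadhan) identity.
lemma sum_mul_sub_sum_mul_log_div_eq {π : Y → ℝ} (hπ : ∀ y, 0 ≤ π y) (hπs : ∑ y, π y = 1) :
    ∑ y, π y * f y - ∑ y, π y * Real.log (π y / π₀ y)
      = Real.log (∑ z, π₀ z * Real.exp (f z))
        - ∑ y, π y * Real.log (π y / gibbsPolicy π₀ f y) := by
  have hsplit : ∀ y, π y * Real.log (π y / π₀ y) = π y * Real.log (π y / gibbsPolicy π₀ f y)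
      + π y * (f y - Real.log (∑ z, π₀ z * Real.exp (f z))) := by
    intro y
    rcases (hπ y).eq_or_lt with hzero | hpos
    · simp [← hzero]
    have hstar := gibbsPolicy_pos hπ₀ f y
    rw [← log_gibbsPolicy_div hπ₀, ← mul_add,
      ← Real.log_mul (div_pos hpos hstar).ne' (div_pos hstar (hπ₀ y)).ne',
      div_mul_div_cancel₀ hstar.ne']
  simp only [hsplit, Finset.sum_add_distrib, mul_sub, Finset.sum_sub_distrib, ← Finset.sum_mul,
    hπs, one_mul]
  ring

end GibbsPolicy

theorem stmt_3_general {Y : Type*} [Fintype Y] [Nonempty Y]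
    (π₀ : Y → ℝ) (hπ₀pos : ∀ y, 0 < π₀ y)
    (β : ℝ) (hβ : 0 < β)
    (w : Y → Y → ℝ)
    (C : Y → ℝ) (hC : ∀ y, C y = ∑ z, π₀ z * w y z)
    (πstar : Y → ℝ)
    (hπstar : ∀ y, πstar y =
      π₀ y * Real.exp (C y / β) / ∑ z, π₀ z * Real.exp (C z / β)) :
    ∀ π : Y → ℝ, (∀ y, 0 ≤ π y) → (∑ y, π y = 1) →
      ((∑ y, ∑ z, w y z * π y * π₀ z) - β * (∑ y, π y * Real.log (π y / π₀ y))
          ≤ (∑ y, ∑ z, w y z * πstar y * π₀ z)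
              - β * (∑ y, πstar y * Real.log (πstar y / π₀ y))
        ∧ ((∑ y, ∑ z, w y z * π y * π₀ z) - β * (∑ y, π y * Real.log (π y / π₀ y))
            = (∑ y, ∑ z, w y z * πstar y * π₀ z)
                - β * (∑ y, πstar y * Real.log (πstar y / π₀ y))
          ↔ π = πstar)) := by
  set f : Y → ℝ := fun y => C y / β
  obtain rfl : πstar = gibbsPolicy π₀ f := funext hπstar
  have hstar_pos := gibbsPolicy_pos hπ₀pos f
  have hstar_nonneg : ∀ y, 0 ≤ gibbsPolicy π₀ f y := fun y => (hstar_pos y).le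
  have hobjective : ∀ π : Y → ℝ, (∀ y, 0 ≤ π y) → ∑ y, π y = 1 →
      (∑ y, ∑ z, w y z * π y * π₀ z) - β * ∑ y, π y * Real.log (π y / π₀ y)
        = β * (Real.log (∑ z, π₀ z * Real.exp (f z))
          - ∑ y, π y * Real.log (π y / gibbsPolicy π₀ f y)) := by
    intro π hπ hπs
    have hwin : ∑ y, ∑ z, w y z * π y * π₀ z = β * ∑ y, π y * f y := by
      simp only [f, hC, Finset.sum_div, Finset.mul_sum]
      refine Finset.sum_congr rfl fun y _ => Finset.sum_congr rfl fun z _ => ?_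
      field_simp
    rw [← sum_mul_sub_sum_mul_log_div_eq hπ₀pos f hπ hπs, hwin]
    ring
  intro π hπ hπs
  have hsum : ∑ y, π y = ∑ y, gibbsPolicy π₀ f y := by rw [hπs, sum_gibbsPolicy hπ₀pos]
  have hKL := sum_mul_log_div_nonneg hπ hstar_pos hsum
  rw [hobjective π hπ hπs, hobjective _ hstar_nonneg (sum_gibbsPolicy hπ₀pos f),
    (sum_mul_log_div_eq_zero_iff hstar_nonneg hstar_pos rfl).mpr rfl,
    ← sum_mul_log_div_eq_zero_iff hπ hstar_pos hsum]
  refine ⟨by nlinarith, fun h => by nlinarith, fun h => by rw [h]⟩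

/-- With calibrated reward `C(y) := Σ_z π₀(z)·w_r(y,z)`, the Gibbs policy
`π*(y) = π₀(y)e^{C(y)/β} / Σ_z π₀(z)e^{C(z)/β}` is the unique maximizer over all policies
of the KL-regularized win-rate objective `π ↦ W_r(π ≻ π₀) − β·KL(π‖π₀)`, where
`W_r(π ≻ π₀) = Σ_{y,z} w_r(y,z)·π(y)·π₀(z)`. -/
theorem stmt_3 {Y : Type*} [Fintype Y] [Nonempty Y]
    (π₀ : Y → ℝ) (hπ₀pos : ∀ y, 0 < π₀ y) (hπ₀sum : ∑ y, π₀ y = 1)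
    (r : Y → ℝ) (β : ℝ) (hβ : 0 < β)
    (w : Y → Y → ℝ)
    (hw : ∀ y z, w y z =
      (if r z < r y then (1 : ℝ) else 0) + (if r y = r z then 1 / 2 else 0))
    (C : Y → ℝ) (hC : ∀ y, C y = ∑ z, π₀ z * w y z)
    (πstar : Y → ℝ)
    (hπstar : ∀ y, πstar y =
      π₀ y * Real.exp (C y / β) / ∑ z, π₀ z * Real.exp (C z / β)) :
    ∀ π : Y → ℝ, (∀ y, 0 ≤ π y) → (∑ y, π y = 1) →
      ((∑ y, ∑ z, w y z * π y * π₀ z) - β * (∑ y, π y * Real.log (π y / π₀ y))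
          ≤ (∑ y, ∑ z, w y z * πstar y * π₀ z)
              - β * (∑ y, πstar y * Real.log (πstar y / π₀ y))
        ∧ ((∑ y, ∑ z, w y z * π y * π₀ z) - β * (∑ y, π y * Real.log (π y / π₀ y))
            = (∑ y, ∑ z, w y z * πstar y * π₀ z)
                - β * (∑ y, πstar y * Real.log (πstar y / π₀ y))
          ↔ π = πstar)) :=
  stmt_3_general π₀ hπ₀pos β hβ w C hC πstar hπstar
end

section
/- Let Y be a measurable space, π a probability measure on Y, and r : Y → ℝ measurable, with π a continuous model for r. Then for every N ≥ 1 and every measurable set A ⊆ Y, the Best-of-N distribution satisfies π^{⊗N}{(y₁,…,y_N) ∈ Y^N : there exists i with y_i ∈ A and r(y_j) < r(y_i) for all j ≠ i} = N · ∫_A C_{r,π}(y)^{N−1} dπ(y); i.e., the law of the highest-reward sample among N i.i.d. draws from π has density N·C_{r,π}^{N−1} with respect to π. -/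
/-!
The event is the disjoint union over `i` of the events "sample `i` lies in `A` and strictly beats
every other sample". Splitting off coordinate `i` of the product measure, given `f i = y` the
other `N - 1` independent samples all fall strictly below `r y` with probability
`π {r < r y} ^ (N - 1)`, so each event has measure `∫⁻ y in A, π {r < r y} ^ (N - 1) ∂π`.
For a continuous model the ties carry no mass, so `π {r < r y}` is the calibrated reward.
-/

open MeasureTheory

section

variable {Y ι : Type*}

def strictMaxIn (r : Y → ℝ) (A : Set Y) (i : ι) : Set (ι → Y) :=
  {f | f i ∈ A ∧ ∀ j, j ≠ i → r (f j) < r (f i)}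

theorem pairwise_disjoint_strictMaxIn (r : Y → ℝ) (A : Set Y) :
    Pairwise (Function.onFun Disjoint (strictMaxIn (ι := ι) r A)) :=
  fun i j hij => Set.disjoint_left.2 fun _ hi hj => lt_asymm (hi.2 j hij.symm) (hj.2 i hij)

variable [MeasurableSpace Y] {r : Y → ℝ} {A : Set Y}

theorem measurableSet_strictMaxIn [Countable ι] (hr : Measurable r) (hA : MeasurableSet A)
    (i : ι) : MeasurableSet (strictMaxIn r A i) := by
  have hlt (j : ι) : MeasurableSet {f : ι → Y | r (f j) < r (f i)} :=
    measurableSet_lt (hr.comp (measurable_pi_apply j)) (hr.comp (measurable_pi_apply i))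
  simp only [strictMaxIn, Set.ofPred_and, Set.ofPred_forall]
  exact (measurable_pi_apply i hA).inter (.iInter fun j => .iInter fun _ => hlt j)

theorem measurable_measure_setOf_lt_comp (π : Measure Y) (hr : Measurable r) :
    Measurable fun y => π {z | r z < r y} :=
  (Monotone.measurable (f := fun t => π {z | r z < t}) fun _ _ hst =>
    measure_mono fun _ hz => lt_of_lt_of_le hz hst).comp hr

theorem measure_pi_strictMaxIn (π : Measure Y) [SigmaFinite π] (hr : Measurable r)
    (hA : MeasurableSet A) {N : ℕ} (i : Fin N) :
    Measure.pi (fun _ => π) (strictMaxIn r A i) = ∫⁻ y in A, π {z | r z < r y} ^ (N - 1) ∂π := by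
  obtain ⟨n, rfl⟩ : ∃ n, N = n + 1 := ⟨N - 1, by have := i.pos; omega⟩
  set T : Set (Y × (Fin n → Y)) := {q | q.1 ∈ A ∧ ∀ j, r (q.2 j) < r q.1}
  have hT : MeasurableSet T := by
    have hlt (j : Fin n) : MeasurableSet {q : Y × (Fin n → Y) | r (q.2 j) < r q.1} :=
      measurableSet_lt (hr.comp ((measurable_pi_apply j).comp measurable_snd))
        (hr.comp measurable_fst)
    simp only [T, Set.ofPred_and, Set.ofPred_forall]
    exact (measurable_fst hA).inter (.iInter hlt)
  have hpre : MeasurableEquiv.piFinSuccAbove (fun _ => Y) i ⁻¹' T = strictMaxIn r A i := by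
    ext f
    simp [T, strictMaxIn, Fin.forall_iff_succAbove i, Fin.removeNth]
  have hslice (y : Y) : Measure.pi (fun _ : Fin n => π) (Prod.mk y ⁻¹' T)
      = A.indicator (fun y => π {z | r z < r y} ^ n) y := by
    by_cases hy : y ∈ A
    · have : Prod.mk y ⁻¹' T = Set.univ.pi fun _ => {z | r z < r y} := by
        ext g; simp [T, hy]
      simp [this, hy, Measure.pi_pi]
    · have : Prod.mk y ⁻¹' T = ∅ := by
        ext g; simp [T, hy]
      simp [this, hy]
  rw [← hpre, (measurePreserving_piFinSuccAbove (fun _ => π) i).measure_preimage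
    hT.nullMeasurableSet, Measure.prod_apply hT]
  simp only [hslice, Nat.add_sub_cancel]
  rw [lintegral_indicator hA]

theorem measure_pi_exists_strictMaxIn (π : Measure Y) [SigmaFinite π] (hr : Measurable r)
    (hA : MeasurableSet A) (N : ℕ) :
    Measure.pi (fun _ : Fin N => π) {f | ∃ i, f i ∈ A ∧ ∀ j, j ≠ i → r (f j) < r (f i)}
      = N * ∫⁻ y in A, π {z | r z < r y} ^ (N - 1) ∂π := by
  rw [← Set.iUnion_ofPred]
  change Measure.pi _ (⋃ i, strictMaxIn r A i) = _
  rw [measure_iUnion (pairwise_disjoint_strictMaxIn r A)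
    (measurableSet_strictMaxIn hr hA), tsum_fintype]
  simp [measure_pi_strictMaxIn π hr hA]

end

theorem stmt_8_general {Y : Type*} [MeasurableSpace Y]
    (π : Measure Y) [IsProbabilityMeasure π]
    (r : Y → ℝ) (hr : Measurable r)
    (hcont : ∀ t : ℝ, π {z | r z = t} = 0)
    (C : Y → ℝ)
    (hC : ∀ y, C y = (π {z | r z < r y}).toReal + (1 / 2) * (π {z | r z = r y}).toReal)
    (N : ℕ) (A : Set Y) (hA : MeasurableSet A) :
    ((Measure.pi fun _ : Fin N => π)
        {f : Fin N → Y | ∃ i, f i ∈ A ∧ ∀ j, j ≠ i → r (f j) < r (f i)}).toReal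
      = N * ∫ y in A, C y ^ (N - 1) ∂π := by
  have hC_lt (y : Y) : C y = (π {z | r z < r y}).toReal := by simp [hC y, hcont (r y)]
  rw [measure_pi_exists_strictMaxIn π hr hA, ENNReal.toReal_mul, ENNReal.toReal_natCast,
    ← integral_toReal ((measurable_measure_setOf_lt_comp π hr).pow_const _).aemeasurable
      (.of_forall fun _ => ENNReal.pow_lt_top (measure_lt_top π _))]
  simp [hC_lt, ENNReal.toReal_pow]

/-- For a continuous model, the Best-of-`N` distribution (the law of the
highest-reward sample among `N` i.i.d. draws from `π`) has density `N·C_{r,π}^{N−1}`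
with respect to `π`. -/
theorem stmt_8 {Y : Type*} [MeasurableSpace Y]
    (π : Measure Y) [IsProbabilityMeasure π]
    (r : Y → ℝ) (hr : Measurable r)
    (hcont : ∀ t : ℝ, π {z | r z = t} = 0)
    (C : Y → ℝ)
    (hC : ∀ y, C y = (π {z | r z < r y}).toReal + (1 / 2) * (π {z | r z = r y}).toReal)
    (N : ℕ) (hN : 1 ≤ N) (A : Set Y) (hA : MeasurableSet A) :
    ((Measure.pi fun _ : Fin N => π)
        {f : Fin N → Y | ∃ i, f i ∈ A ∧ ∀ j, j ≠ i → r (f j) < r (f i)}).toReal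
      = N * ∫ y in A, C y ^ (N - 1) ∂π :=
  stmt_8_general π r hr hcont C hC N A hA
end

section
/- Let Y be a measurable space, π₀ a probability measure on Y, and r : Y → ℝ measurable, with π₀ a continuous model for r. Let β > 0, let Φ : [0,1] → ℝ be bounded measurable, set C := C_{r,π₀}, Z := ∫₀¹ e^{Φ(u)/β} du, and let π* be the probability measure with density y ↦ e^{Φ(C(y))/β}/Z with respect to π₀ (π* is a probability measure since C pushes π₀ forward to the uniform measure on [0,1]). Then for every N ≥ 1, the Best-of-N win rate of π* against π₀ satisfies (π*)^{⊗N} ⊗ π₀^{⊗N}{((y₁,…,y_N),(z₁,…,z_N)) : max_i r(y_i) > max_j r(z_j)} = 1 − N·∫₀¹ F_{Φ,β}(u)^N · u^{N−1} du, and the event max_i r(y_i) = max_j r(z_j) has probability 0. -/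
/-!
For a continuous model the calibrated reward is `cdf (π₀.map r) ∘ r`, and the probability integral
transform makes it uniform on `[0, 1]` under `π₀`; hence under `π*` its CDF is `F`. Given the
`π*`-samples `y`, all `N` reference samples lose with probability
`cdf (max r(yᵢ))^N = (max C(yᵢ))^N`, and `W = max C(yᵢ)` has CDF `F^N`, so the layer-cake formula
`E[W^N] = ∫₀¹ N t^(N-1) P(W > t) dt` gives the win rate. A tie needs some reference sample to hit
the single value `max r(yᵢ)`, which is a null event for a continuous model.
-/

open MeasureTheory ProbabilityTheory Set Filter

namespace ProbabilityTheory

variable {μ : Measure ℝ} [IsProbabilityMeasure μ] [NullSingletonClass μ]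

theorem continuous_cdf : Continuous (cdf μ) := by
  refine continuous_iff_continuousAt.2 fun x => continuousAt_iff_continuous_left_right.2
    ⟨?_, (cdf μ).right_continuous x⟩
  rw [← continuousWithinAt_Iio_iff_Iic, (monotone_cdf μ).continuousWithinAt_Iio_iff_leftLim_eq]
  have h := (cdf μ).measure_singleton x
  rw [measure_cdf, measure_singleton, eq_comm, ENNReal.ofReal_eq_zero, sub_nonpos] at h
  exact le_antisymm ((monotone_cdf μ).leftLim_le le_rfl) h

theorem measure_setOf_cdf_le {a : ℝ} (ha : a ∈ Ico 0 1) :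
    μ {t | cdf μ t ≤ a} = ENNReal.ofReal a := by
  set S := {t | cdf μ t ≤ a}
  rcases S.eq_empty_or_nonempty with hS | ⟨t₁, ht₁⟩
  · have : a ≤ 0 := ge_of_tendsto' (tendsto_cdf_atBot μ) fun t =>
      (not_le.1 (eq_empty_iff_forall_notMem.1 hS t)).le
    rw [hS, measure_empty, le_antisymm this ha.1, ENNReal.ofReal_zero]
  obtain ⟨b, hb⟩ := ((tendsto_cdf_atTop μ).eventually (lt_mem_nhds ha.2)).exists_forall_of_atTop
  have hbdd : BddAbove S := ⟨b, fun t ht => not_lt.1 fun hbt => (hb t hbt.le).not_ge ht⟩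
  obtain ⟨t, rfl⟩ : a ∈ range (cdf μ) :=
    intermediate_value_univ t₁ b continuous_cdf ⟨ht₁, (hb b le_rfl).le⟩
  have hsup_mem : sSup S ∈ S :=
    (isClosed_le continuous_cdf continuous_const).csSup_mem ⟨t₁, ht₁⟩ hbdd
  have hS : S = Iic (sSup S) := Subset.antisymm (fun s hs => le_csSup hbdd hs)
    fun s hs => (monotone_cdf μ hs).trans hsup_mem
  rw [hS, ← ofReal_cdf]
  exact congrArg _ (le_antisymm hsup_mem (monotone_cdf μ (le_csSup hbdd (le_refl (cdf μ t)))))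

theorem map_cdf_eq_restrict_Icc : μ.map (cdf μ) = volume.restrict (Icc 0 1) := by
  refine Measure.ext_of_Iic _ _ fun a => ?_
  rw [Measure.map_apply continuous_cdf.measurable measurableSet_Iic,
    Measure.restrict_apply measurableSet_Iic]
  have hIcc : Iic a ∩ Icc (0 : ℝ) 1 = Icc 0 (min a 1) := by
    ext x; simp only [mem_inter_iff, mem_Iic, mem_Icc, le_min_iff]; tauto
  rw [hIcc]
  rcases lt_or_ge a 0 with ha0 | ha0
  · have hempty : cdf μ ⁻¹' Iic a = ∅ :=
      eq_empty_of_forall_notMem fun t ht => ha0.not_ge ((cdf_nonneg μ t).trans ht)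
    rw [hempty, Icc_eq_empty_of_lt (min_lt_of_left_lt ha0), measure_empty, measure_empty]
  rcases lt_or_ge a 1 with ha1 | ha1
  · rw [min_eq_left ha1.le, Real.volume_Icc, sub_zero]
    exact measure_setOf_cdf_le ⟨ha0, ha1⟩
  · have huniv : cdf μ ⁻¹' Iic a = univ :=
      eq_univ_of_forall fun t => (cdf_le_one μ t).trans ha1
    rw [huniv, min_eq_right ha1, Real.volume_Icc, measure_univ, sub_zero, ENNReal.ofReal_one]

end ProbabilityTheory

namespace MeasureTheory

variable {α : Type*} [MeasurableSpace α]

theorem withDensity_comp_apply_le {π₀ : Measure α} {X : α → ℝ} (hX : Measurable X)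
    (hmap : π₀.map X = volume.restrict (Icc 0 1)) {f : ℝ → ℝ} (hf : Measurable f)
    (hf_nonneg : ∀ t, 0 ≤ f t) (hf_int : IntegrableOn f (Icc 0 1)) {u : ℝ} (hu : u ∈ Icc 0 1) :
    π₀.withDensity (fun x => ENNReal.ofReal (f (X x))) {x | X x ≤ u}
      = ENNReal.ofReal (∫ t in 0..u, f t) := by
  have hIcc : Iic u ∩ Icc (0 : ℝ) 1 = Icc 0 u := by
    ext t; simp only [mem_inter_iff, mem_Iic, mem_Icc]
    exact ⟨fun h => ⟨h.2.1, h.1⟩, fun h => ⟨h.2, h.1, h.2.trans hu.2⟩⟩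
  rw [show {x | X x ≤ u} = X ⁻¹' Iic u from rfl, withDensity_apply _ (hX measurableSet_Iic),
    ← setLIntegral_map measurableSet_Iic hf.ennreal_ofReal hX, hmap,
    Measure.restrict_restrict measurableSet_Iic, hIcc, intervalIntegral.integral_of_le hu.1,
    setIntegral_congr_set Ioc_ae_eq_Icc,
    ofReal_integral_eq_lintegral_ofReal (hf_int.mono_set (Icc_subset_Icc le_rfl hu.2))
      (ae_of_all _ hf_nonneg)]

theorem integrableOn_exp_div_of_abs_le {μ : Measure ℝ} {s : Set ℝ} (hs : MeasurableSet s)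
    (hμs : μ s ≠ ⊤) {Φ : ℝ → ℝ} (hΦ : Measurable Φ) {M : ℝ} (hM : ∀ u ∈ s, |Φ u| ≤ M) (β : ℝ) :
    IntegrableOn (fun t => Real.exp (Φ t / β)) s μ := by
  refine Measure.integrableOn_of_bounded hμs (hΦ.div_const β).exp.aestronglyMeasurable
    (M := Real.exp (M / |β|)) (ae_restrict_of_forall_mem hs fun t ht => ?_)
  rw [Real.norm_eq_abs, Real.abs_exp, Real.exp_le_exp]
  exact (le_abs_self _).trans ((abs_div _ _).trans_le
    (div_le_div_of_nonneg_right (hM t ht) (abs_nonneg β)))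

section MaxOfSamples

variable {ι : Type*} [Fintype ι] [Nonempty ι] (ν : Measure α) [SigmaFinite ν] (X : α → ℝ) (s : ℝ)

theorem measure_pi_iSup_le :
    Measure.pi (fun _ : ι => ν) {y | ⨆ i, X (y i) ≤ s} = ν {x | X x ≤ s} ^ Fintype.card ι := by
  have : {y : ι → α | ⨆ i, X (y i) ≤ s} = univ.pi fun _ => {x | X x ≤ s} := by
    ext y; simp [ciSup_le_iff (Finite.bddAbove_range _)]
  rw [this, Measure.pi_pi, Finset.prod_const, Finset.card_univ]

theorem measure_pi_iSup_lt :
    Measure.pi (fun _ : ι => ν) {y | ⨆ i, X (y i) < s} = ν {x | X x < s} ^ Fintype.card ι := by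
  have : {y : ι → α | ⨆ i, X (y i) < s} = univ.pi fun _ => {x | X x < s} := by
    ext y
    obtain ⟨j, hj⟩ := exists_eq_ciSup_of_finite (f := fun i => X (y i))
    simp only [mem_ofPred_eq, mem_univ_pi]
    exact ⟨fun h i => (le_ciSup (Finite.bddAbove_range _) i).trans_lt h, fun h => hj ▸ h j⟩
  rw [this, Measure.pi_pi, Finset.prod_const, Finset.card_univ]

theorem measure_pi_iSup_eq_null (hX : ∀ t, ν {x | X x = t} = 0) :
    Measure.pi (fun _ : ι => ν) {y | ⨆ i, X (y i) = s} = 0 := by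
  refine measure_mono_null (t := ⋃ j : ι, Function.eval j ⁻¹' {x | X x = s})
    (fun y (hy : _ = s) => ?_)
    (measure_iUnion_null fun j => Measure.pi_eval_preimage_null _ (hX s))
  obtain ⟨j, hj⟩ := exists_eq_ciSup_of_finite (f := fun i => X (y i))
  exact mem_iUnion.2 ⟨j, hj.trans hy⟩

end MaxOfSamples

section LayerCake

variable {P : Measure α} [IsProbabilityMeasure P] {M : α → ℝ}

theorem integral_natCast_mul_pow_sub_one {n : ℕ} (hn : n ≠ 0) (b : ℝ) :
    ∫ t in 0..b, (n : ℝ) * t ^ (n - 1) = b ^ n := by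
  rw [intervalIntegral.integral_eq_sub_of_hasDerivAt (fun x _ => hasDerivAt_pow n x)
    ((by fun_prop : Continuous fun t : ℝ => (n : ℝ) * t ^ (n - 1)).intervalIntegrable _ _),
    zero_pow hn, sub_zero]

theorem intervalIntegrable_measureReal_le_mul {g : ℝ → ℝ} (hg : Continuous g) :
    IntervalIntegrable (fun t => P.real {x | M x ≤ t} * g t) volume 0 1 := by
  have hmeas : Measurable fun t => P.real {x | M x ≤ t} :=
    Monotone.measurable fun s t hst => measureReal_mono fun x hx => le_trans hx hst
  refine IntegrableOn.intervalIntegrable ?_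
  rw [uIcc_of_le zero_le_one]
  refine hg.integrableOn_Icc.bdd_mul (c := 1) hmeas.aestronglyMeasurable
    (Eventually.of_forall fun t => ?_)
  rw [Real.norm_eq_abs, abs_of_nonneg measureReal_nonneg]
  exact measureReal_le_one

theorem lintegral_ofReal_pow_eq_of_mem_Icc (hM : Measurable M) (hM01 : ∀ x, M x ∈ Icc 0 1)
    {n : ℕ} (hn : n ≠ 0) :
    ∫⁻ x, ENNReal.ofReal (M x ^ n) ∂P
      = ENNReal.ofReal (∫ t in 0..1, (1 - P.real {x | M x ≤ t}) * (n * t ^ (n - 1))) := by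
  set g : ℝ → ℝ := fun t => n * t ^ (n - 1)
  have hg_cont : Continuous g := by fun_prop
  have hg_nonneg : ∀ t, 0 ≤ t → 0 ≤ g t := fun t ht => by positivity
  have hint : IntervalIntegrable (fun t => (1 - P.real {x | M x ≤ t}) * g t) volume 0 1 := by
    simpa only [sub_mul, one_mul] using
      (hg_cont.intervalIntegrable 0 1).sub (intervalIntegrable_measureReal_le_mul hg_cont)
  have htail : ∀ t ∈ Ioc (0 : ℝ) 1, P {x | t < M x} * ENNReal.ofReal (g t)
      = ENNReal.ofReal ((1 - P.real {x | M x ≤ t}) * g t) := fun t _ => by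
    have hcompl : {x | t < M x} = {x | M x ≤ t}ᶜ := by ext; simp
    rw [ENNReal.ofReal_mul (sub_nonneg.2 measureReal_le_one), ← ofReal_measureReal, hcompl,
      probReal_compl_eq_one_sub (measurableSet_le hM measurable_const)]
  have hvanish : ∀ t ∈ Ioi (1 : ℝ), P {x | t < M x} * ENNReal.ofReal (g t) = 0 := fun t ht => by
    have : {x | t < M x} = ∅ :=
      eq_empty_of_forall_notMem fun x hx => (ht.trans hx).not_ge (hM01 x).2
    rw [this, measure_empty, zero_mul]
  calc ∫⁻ x, ENNReal.ofReal (M x ^ n) ∂P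
      = ∫⁻ x, ENNReal.ofReal (∫ t in 0..M x, g t) ∂P := by
        simp only [g, integral_natCast_mul_pow_sub_one hn]
    _ = ∫⁻ t in Ioi 0, P {x | t < M x} * ENNReal.ofReal (g t) :=
        lintegral_comp_eq_lintegral_meas_lt_mul P (Eventually.of_forall fun x => (hM01 x).1)
          hM.aemeasurable (fun t _ => hg_cont.intervalIntegrable _ _)
          (ae_restrict_of_forall_mem measurableSet_Ioi fun t ht => hg_nonneg t (le_of_lt ht))
    _ = ∫⁻ t in Ioc 0 1, ENNReal.ofReal ((1 - P.real {x | M x ≤ t}) * g t) := by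
        rw [← Ioc_union_Ioi_eq_Ioi zero_le_one,
          lintegral_union measurableSet_Ioi (Ioc_disjoint_Ioi le_rfl),
          setLIntegral_congr_fun measurableSet_Ioc htail,
          setLIntegral_congr_fun measurableSet_Ioi hvanish, lintegral_zero, add_zero]
    _ = ENNReal.ofReal (∫ t in 0..1, (1 - P.real {x | M x ≤ t}) * g t) := by
        rw [intervalIntegral.integral_of_le zero_le_one, ofReal_integral_eq_lintegral_ofReal hint.1
          (ae_restrict_of_forall_mem measurableSet_Ioc fun t ht =>
            mul_nonneg (sub_nonneg.2 measureReal_le_one) (hg_nonneg t ht.1.le))]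

theorem integral_pow_eq_one_sub_integral_cdf (hM : Measurable M) (hM01 : ∀ x, M x ∈ Icc 0 1)
    {n : ℕ} (hn : n ≠ 0) :
    ∫ x, M x ^ n ∂P = 1 - n * ∫ t in 0..1, P.real {x | M x ≤ t} * t ^ (n - 1) := by
  have hg_cont : Continuous fun t : ℝ => (n : ℝ) * t ^ (n - 1) := by fun_prop
  rw [integral_eq_lintegral_of_nonneg_ae (Eventually.of_forall fun x => pow_nonneg (hM01 x).1 n)
      (hM.pow_const n).aestronglyMeasurable, lintegral_ofReal_pow_eq_of_mem_Icc hM hM01 hn,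
    ENNReal.toReal_ofReal (intervalIntegral.integral_nonneg zero_le_one fun t ht =>
      mul_nonneg (sub_nonneg.2 measureReal_le_one) (by positivity [ht.1]))]
  simp only [sub_mul, one_mul]
  rw [intervalIntegral.integral_sub (hg_cont.intervalIntegrable 0 1)
      (intervalIntegrable_measureReal_le_mul hg_cont), integral_natCast_mul_pow_sub_one hn,
    one_pow, ← intervalIntegral.integral_const_mul]
  simp only [mul_left_comm]

end LayerCake

end MeasureTheory

section BestOfN

variable {Y : Type*} [MeasurableSpace Y] {π₀ : Measure Y} {r : Y → ℝ}

noncomputable def calibratedReward (π₀ : Measure Y) (r : Y → ℝ) (y : Y) : ℝ :=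
  π₀.real {z | r z < r y} + 1 / 2 * π₀.real {z | r z = r y}

theorem nullSingletonClass_map (hr : Measurable r) (hcont : ∀ t, π₀ {z | r z = t} = 0) :
    NullSingletonClass (π₀.map r) :=
  ⟨fun t => by rw [Measure.map_apply hr (measurableSet_singleton t)]; exact hcont t⟩

variable [IsProbabilityMeasure π₀]

theorem measure_lt_eq_ofReal_cdf (hr : Measurable r) (hcont : ∀ t, π₀ {z | r z = t} = 0)
    (s : ℝ) : π₀ {z | r z < s} = ENNReal.ofReal (cdf (π₀.map r) s) := by
  have := Measure.isProbabilityMeasure_map (μ := π₀) hr.aemeasurable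
  have := nullSingletonClass_map hr hcont
  rw [ofReal_cdf, ← measure_congr Iio_ae_eq_Iic, Measure.map_apply hr measurableSet_Iio]
  rfl

theorem calibratedReward_eq_cdf (hr : Measurable r) (hcont : ∀ t, π₀ {z | r z = t} = 0) :
    calibratedReward π₀ r = fun y => cdf (π₀.map r) (r y) := by
  ext y
  rw [calibratedReward, measureReal_def, measureReal_def, hcont, measure_lt_eq_ofReal_cdf hr hcont,
    ENNReal.toReal_ofReal (cdf_nonneg _ _)]
  simp

theorem map_calibratedReward (hr : Measurable r) (hcont : ∀ t, π₀ {z | r z = t} = 0) :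
    π₀.map (calibratedReward π₀ r) = volume.restrict (Icc 0 1) := by
  have := Measure.isProbabilityMeasure_map (μ := π₀) hr.aemeasurable
  have := nullSingletonClass_map hr hcont
  rw [calibratedReward_eq_cdf hr hcont]
  exact (Measure.map_map continuous_cdf.measurable hr).symm.trans map_cdf_eq_restrict_Icc

theorem measurable_calibratedReward (hr : Measurable r) (hcont : ∀ t, π₀ {z | r z = t} = 0) :
    Measurable (calibratedReward π₀ r) := by
  have := Measure.isProbabilityMeasure_map (μ := π₀) hr.aemeasurable
  have := nullSingletonClass_map hr hcont
  rw [calibratedReward_eq_cdf hr hcont]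
  exact continuous_cdf.measurable.comp hr

theorem calibratedReward_le_one (hr : Measurable r) (hcont : ∀ t, π₀ {z | r z = t} = 0) (y : Y) :
    calibratedReward π₀ r y ≤ 1 := by
  rw [calibratedReward_eq_cdf hr hcont]
  exact cdf_le_one _ _

theorem measure_bestOfN_win (π : Measure Y) [IsProbabilityMeasure π] (hr : Measurable r)
    (hcont : ∀ t, π₀ {z | r z = t} = 0) {N : ℕ} (hN : N ≠ 0) :
    (((Measure.pi fun _ : Fin N => π).prod (Measure.pi fun _ : Fin N => π₀))
        {p | (⨆ j, r (p.2 j)) < ⨆ i, r (p.1 i)}).toReal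
      = 1 - N * ∫ u in 0..1, π.real {y | calibratedReward π₀ r y ≤ u} ^ N * u ^ (N - 1) := by
  have := Measure.isProbabilityMeasure_map (μ := π₀) hr.aemeasurable
  have := nullSingletonClass_map hr hcont
  have : NeZero N := ⟨hN⟩
  have hbest_meas : Measurable fun y : Fin N → Y => ⨆ i, r (y i) :=
    Measurable.iSup fun i => hr.comp (measurable_pi_apply i)
  set W : (Fin N → Y) → ℝ := fun y => ⨆ i, calibratedReward π₀ r (y i)
  have hW : ∀ y, W y = cdf (π₀.map r) (⨆ i, r (y i)) := fun y => by
    simp only [W, calibratedReward_eq_cdf hr hcont]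
    exact ((monotone_cdf _).map_ciSup_of_continuousAt continuous_cdf.continuousAt
      (Finite.bddAbove_range _)).symm
  have hW_meas : Measurable W := by
    rw [show W = _ from funext hW]
    exact continuous_cdf.measurable.comp hbest_meas
  have hW01 : ∀ y, W y ∈ Icc 0 1 := fun y => hW y ▸ ⟨cdf_nonneg _ _, cdf_le_one _ _⟩
  have hlose : ∀ y, Measure.pi (fun _ : Fin N => π₀) {z | ⨆ j, r (z j) < ⨆ i, r (y i)}
      = ENNReal.ofReal (W y ^ N) := fun y => by
    rw [measure_pi_iSup_lt, measure_lt_eq_ofReal_cdf hr hcont, ← hW, Fintype.card_fin,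
      ENNReal.ofReal_pow (hW01 y).1]
  have hwin : MeasurableSet {p : (Fin N → Y) × (Fin N → Y) | ⨆ j, r (p.2 j) < ⨆ i, r (p.1 i)} :=
    measurableSet_lt (hbest_meas.comp measurable_snd) (hbest_meas.comp measurable_fst)
  rw [Measure.prod_apply hwin]
  simp only [preimage_ofPred_eq]
  rw [lintegral_congr hlose,
    ← integral_eq_lintegral_of_nonneg_ae (Eventually.of_forall fun y => pow_nonneg (hW01 y).1 N)
      (hW_meas.pow_const N).aestronglyMeasurable,
    integral_pow_eq_one_sub_integral_cdf hW_meas hW01 hN]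
  simp only [W, measureReal_def, measure_pi_iSup_le, Fintype.card_fin, ENNReal.toReal_pow]

theorem measure_bestOfN_tie (π : Measure Y) (hr : Measurable r)
    (hcont : ∀ t, π₀ {z | r z = t} = 0) {N : ℕ} (hN : N ≠ 0) :
    ((Measure.pi fun _ : Fin N => π).prod (Measure.pi fun _ : Fin N => π₀))
        {p | (⨆ i, r (p.1 i)) = ⨆ j, r (p.2 j)} = 0 := by
  have : NeZero N := ⟨hN⟩
  have hbest_meas : Measurable fun y : Fin N → Y => ⨆ i, r (y i) :=
    Measurable.iSup fun i => hr.comp (measurable_pi_apply i)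
  have htie : MeasurableSet {p : (Fin N → Y) × (Fin N → Y) | ⨆ i, r (p.1 i) = ⨆ j, r (p.2 j)} :=
    measurableSet_eq_fun (hbest_meas.comp measurable_fst) (hbest_meas.comp measurable_snd)
  rw [Measure.measure_prod_null htie]
  refine Eventually.of_forall fun y => ?_
  simp only [preimage_ofPred_eq, Pi.zero_apply, eq_comm (a := ⨆ i, r (y i))]
  exact measure_pi_iSup_eq_null π₀ r _ hcont

end BestOfN

theorem stmt_10_general {Y : Type*} [MeasurableSpace Y]
    (π₀ : Measure Y) [IsProbabilityMeasure π₀]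
    (r : Y → ℝ) (hr : Measurable r)
    (hcont : ∀ t : ℝ, π₀ {z | r z = t} = 0)
    (β : ℝ)
    (Φ : ℝ → ℝ) (hΦm : Measurable Φ)
    (hΦb : ∃ M, ∀ u ∈ Set.Icc (0 : ℝ) 1, |Φ u| ≤ M)
    (C : Y → ℝ)
    (hC : ∀ y, C y = (π₀ {z | r z < r y}).toReal + (1 / 2) * (π₀ {z | r z = r y}).toReal)
    (Z : ℝ) (hZ : Z = ∫ u in (0 : ℝ)..1, Real.exp (Φ u / β))
    (πstar : Measure Y)
    (hπstar : πstar = π₀.withDensity fun y => ENNReal.ofReal (Real.exp (Φ (C y) / β) / Z))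
    (F : ℝ → ℝ)
    (hF : ∀ u, F u = (∫ t in (0 : ℝ)..u, Real.exp (Φ t / β)) / Z)
    (N : ℕ) (hN : 1 ≤ N) :
    (((Measure.pi fun _ : Fin N => πstar).prod (Measure.pi fun _ : Fin N => π₀))
        {p : (Fin N → Y) × (Fin N → Y) | (⨆ j, r (p.2 j)) < ⨆ i, r (p.1 i)}).toReal
      = 1 - N * ∫ u in (0 : ℝ)..1, F u ^ N * u ^ (N - 1)
    ∧ ((Measure.pi fun _ : Fin N => πstar).prod (Measure.pi fun _ : Fin N => π₀))
        {p : (Fin N → Y) × (Fin N → Y) | (⨆ i, r (p.1 i)) = ⨆ j, r (p.2 j)} = 0 := by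
  obtain rfl : C = calibratedReward π₀ r := funext hC
  obtain ⟨M, hM⟩ := hΦb
  have hexp_int := integrableOn_exp_div_of_abs_le measurableSet_Icc
    (measure_Icc_lt_top (μ := volume)).ne hΦm hM β
  have hZ_pos : 0 < Z := hZ ▸ intervalIntegral.intervalIntegral_pos_of_pos_on
    (hexp_int.mono_set (uIcc_of_le zero_le_one).subset).intervalIntegrable
    (fun t _ => Real.exp_pos _) zero_lt_one
  have hlaw : ∀ u ∈ Icc (0 : ℝ) 1,
      πstar {y | calibratedReward π₀ r y ≤ u} = ENNReal.ofReal (F u) := fun u hu => by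
    rw [hπstar, hF, ← intervalIntegral.integral_div]
    exact withDensity_comp_apply_le (measurable_calibratedReward hr hcont)
      (map_calibratedReward hr hcont) ((hΦm.div_const β).exp.div_const Z)
      (fun t => div_nonneg (Real.exp_pos _).le hZ_pos.le) (hexp_int.div_const Z) hu
  have : IsProbabilityMeasure πstar := by
    have huniv : {y | calibratedReward π₀ r y ≤ 1} = univ :=
      eq_univ_of_forall (calibratedReward_le_one hr hcont)
    refine ⟨?_⟩
    rw [← huniv, hlaw 1 ⟨zero_le_one, le_rfl⟩, hF, ← hZ, div_self hZ_pos.ne', ENNReal.ofReal_one]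
  have hN₀ : N ≠ 0 := Nat.one_le_iff_ne_zero.1 hN
  refine ⟨?_, measure_bestOfN_tie πstar hr hcont hN₀⟩
  rw [measure_bestOfN_win πstar hr hcont hN₀]
  congr 2
  refine intervalIntegral.integral_congr fun u hu => ?_
  rw [uIcc_of_le zero_le_one] at hu
  rw [measureReal_def, hlaw u hu, ENNReal.toReal_ofReal (hF u ▸ div_nonneg
    (intervalIntegral.integral_nonneg hu.1 fun t _ => (Real.exp_pos _).le) hZ_pos.le)]

/-- Let `π₀` be a continuous model for `r`, `β > 0`, `Φ : [0,1] → ℝ` bounded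
measurable, `C := C_{r,π₀}`, `Z := ∫₀¹ e^{Φ(u)/β} du`, and let `π*` have density
`e^{Φ(C(y))/β}/Z` with respect to `π₀`. Then for every `N ≥ 1` the Best-of-`N` win rate of
`π*` against `π₀` equals `1 − N·∫₀¹ F_{Φ,β}(u)^N u^{N−1} du`, and ties have probability 0. -/
theorem stmt_10 {Y : Type*} [MeasurableSpace Y]
    (π₀ : Measure Y) [IsProbabilityMeasure π₀]
    (r : Y → ℝ) (hr : Measurable r)
    (hcont : ∀ t : ℝ, π₀ {z | r z = t} = 0)
    (β : ℝ) (hβ : 0 < β)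
    (Φ : ℝ → ℝ) (hΦm : Measurable Φ)
    (hΦb : ∃ M, ∀ u ∈ Set.Icc (0 : ℝ) 1, |Φ u| ≤ M)
    (C : Y → ℝ)
    (hC : ∀ y, C y = (π₀ {z | r z < r y}).toReal + (1 / 2) * (π₀ {z | r z = r y}).toReal)
    (Z : ℝ) (hZ : Z = ∫ u in (0 : ℝ)..1, Real.exp (Φ u / β))
    (πstar : Measure Y)
    (hπstar : πstar = π₀.withDensity fun y => ENNReal.ofReal (Real.exp (Φ (C y) / β) / Z))
    (F : ℝ → ℝ)
    (hF : ∀ u, F u = (∫ t in (0 : ℝ)..u, Real.exp (Φ t / β)) / Z)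
    (N : ℕ) (hN : 1 ≤ N) :
    (((Measure.pi fun _ : Fin N => πstar).prod (Measure.pi fun _ : Fin N => π₀))
        {p : (Fin N → Y) × (Fin N → Y) | (⨆ j, r (p.2 j)) < ⨆ i, r (p.1 i)}).toReal
      = 1 - N * ∫ u in (0 : ℝ)..1, F u ^ N * u ^ (N - 1)
    ∧ ((Measure.pi fun _ : Fin N => πstar).prod (Measure.pi fun _ : Fin N => π₀))
        {p : (Fin N → Y) × (Fin N → Y) | (⨆ i, r (p.1 i)) = ⨆ j, r (p.2 j)} = 0 :=
  stmt_10_general π₀ r hr hcont β Φ hΦm hΦb C hC Z hZ πstar hπstar F hF N hN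
end

section
/- In the log-linear model setup, suppose θ* ∈ ℝᵈ is a critical point of the SFT loss, ∇_θ L_sft(θ*) = 0. Then for every θ ∈ ℝᵈ, E_{x∼μ}[KL(π_{θ*}(·|x) ‖ π_θ(·|x))] = L_sft(θ) − L_sft(θ*). Consequently, for any reward r : X × Y → ℝ and any β > 0, defining L_ro(θ) := −E_{x∼μ}[Σ_y π_θ(y|x)·r(x,y)], the KL-regularized objective θ ↦ E_{x∼μ}[KL(π_{θ*}(·|x) ‖ π_θ(·|x))] + (1/β)·L_ro(θ) and the multi-task objective θ ↦ L_sft(θ) + (1/β)·L_ro(θ) differ by the constant −L_sft(θ*), independent of θ, and hence have the same set of minimizers; i.e., KL-regularized reward optimization is equivalent to multi-tasking the SFT task and the reward optimization task. -/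
open scoped RealInnerProductSpace

/-! At a critical point `θ*` of the SFT loss the policy `π_{θ*}` matches the data moments,
`E_{x∼μ} E_{π_{θ*}(·|x)}[g] = E_D[g]`. For the exponential family `π_θ(·|x)` the divergence
`KL(π_{θ*}(·|x) ‖ π_θ(·|x))` is the Bregman divergence `A(θ;x) − A(θ*;x) − ⟪θ − θ*, E_{π_{θ*}}[g]⟫`
of the log-partition function; averaging over `x` and using moment matching turns it into
`L_sft(θ) − L_sft(θ*)`. -/

open InnerProductSpace Real

noncomputable section

def kl {Y : Type*} [Fintype Y] (p q : Y → ℝ) : ℝ := ∑ y, p y * log (p y / q y)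

section LogLinear

variable {Y E : Type*} [Fintype Y] [NormedAddCommGroup E] [InnerProductSpace ℝ E]

def logPartition (φ : Y → E) (θ : E) : ℝ := log (∑ y, exp ⟪θ, φ y⟫)

def gibbs (φ : Y → E) (θ : E) (y : Y) : ℝ := exp (⟪θ, φ y⟫ - logPartition φ θ)

lemma hasGradientAt_inner_left [CompleteSpace E] (v θ : E) :
    HasGradientAt (fun θ : E => ⟪θ, v⟫) v θ :=
  (toDual ℝ E v).hasFDerivAt.congr_of_eventuallyEq (.of_forall fun θ => real_inner_comm v θ)

variable [Nonempty Y] (φ : Y → E)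

lemma sum_exp_inner_pos (θ : E) : 0 < ∑ y, exp ⟪θ, φ y⟫ :=
  Finset.sum_pos (fun _ _ => exp_pos _) Finset.univ_nonempty

lemma gibbs_eq_div (θ : E) (y : Y) : gibbs φ θ y = exp ⟪θ, φ y⟫ / ∑ y', exp ⟪θ, φ y'⟫ := by
  rw [gibbs, logPartition, exp_sub, exp_log (sum_exp_inner_pos φ θ)]

omit [Nonempty Y] in
lemma gibbs_pos (θ : E) (y : Y) : 0 < gibbs φ θ y :=
  exp_pos _

omit [Nonempty Y] in
lemma log_gibbs (θ : E) (y : Y) : log (gibbs φ θ y) = ⟪θ, φ y⟫ - logPartition φ θ :=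
  log_exp _

lemma sum_gibbs (θ : E) : ∑ y, gibbs φ θ y = 1 := by
  simp_rw [gibbs_eq_div, ← Finset.sum_div]
  exact div_self (sum_exp_inner_pos φ θ).ne'

lemma hasGradientAt_logPartition [CompleteSpace E] (θ : E) :
    HasGradientAt (logPartition φ) (∑ y, gibbs φ θ y • φ y) θ := by
  have h := (HasFDerivAt.fun_sum fun y _ => (hasGradientAt_inner_left (φ y) θ).hasFDerivAt.exp).log
    (sum_exp_inner_pos φ θ).ne'
  refine hasGradientAt_iff_hasFDerivAt.mpr (h.congr_fderiv ?_)
  ext u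
  simp [toDual_apply_apply, gibbs_eq_div, div_eq_inv_mul, Finset.mul_sum, mul_assoc]

lemma kl_gibbs_gibbs (θ' θ : E) :
    kl (gibbs φ θ') (gibbs φ θ)
      = logPartition φ θ - logPartition φ θ' - ⟪θ - θ', ∑ y, gibbs φ θ' y • φ y⟫ := by
  have hlog : ∀ y, log (gibbs φ θ' y / gibbs φ θ y)
      = (logPartition φ θ - logPartition φ θ') - ⟪θ - θ', φ y⟫ := fun y => by
    rw [log_div (gibbs_pos φ θ' y).ne' (gibbs_pos φ θ y).ne', log_gibbs, log_gibbs, inner_sub_left]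
    ring
  simp only [kl, hlog, mul_sub, Finset.sum_sub_distrib, ← Finset.sum_mul, sum_gibbs, mul_one,
    inner_sum, inner_smul_right, mul_comm]

end LogLinear

section SFT

variable {X Y E : Type*} [Fintype X] [Fintype Y] [Nonempty Y]
  [NormedAddCommGroup E] [InnerProductSpace ℝ E] [CompleteSpace E]
  (g : X × Y → E) (D : X × Y → ℝ)

def sftLoss (θ : E) : ℝ := ∑ p, D p * (logPartition (fun y => g (p.1, y)) θ - ⟪θ, g p⟫)

lemma hasGradientAt_sftLoss (θ : E) :
    HasGradientAt (sftLoss g D)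
      (∑ p, D p • (∑ y, gibbs (fun y => g (p.1, y)) θ y • g (p.1, y) - g p)) θ := by
  rw [hasGradientAt_iff_hasFDerivAt, map_sum]
  refine HasFDerivAt.fun_sum fun p _ => ?_
  rw [map_smul, map_sub]
  exact ((hasGradientAt_logPartition _ θ).hasFDerivAt.sub
    (hasGradientAt_inner_left (g p) θ).hasFDerivAt).const_mul (D p)

lemma sum_smul_gibbs_mean_sub_eq_zero {θs : E} (hθs : HasGradientAt (sftLoss g D) 0 θs) :
    ∑ p, D p • (∑ y, gibbs (fun y => g (p.1, y)) θs y • g (p.1, y) - g p) = 0 :=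
  (hasGradientAt_sftLoss g D θs).unique hθs

lemma sum_marginal_mul_kl_eq_sftLoss_sub {θs : E} (hθs : HasGradientAt (sftLoss g D) 0 θs)
    (θ : E) :
    ∑ x, (∑ y, D (x, y)) * kl (gibbs (fun y => g (x, y)) θs) (gibbs (fun y => g (x, y)) θ)
      = sftLoss g D θ - sftLoss g D θs := by
  set A : E → X → ℝ := fun θ x => logPartition (fun y => g (x, y)) θ
  set m : X → E := fun x => ∑ y, gibbs (fun y => g (x, y)) θs y • g (x, y)
  have hmarginal : ∀ F : X → ℝ, ∑ x, (∑ y, D (x, y)) * F x = ∑ p, D p * F p.1 := fun F => by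
    simp only [Fintype.sum_prod_type, Finset.sum_mul]
  have hmoment : ∑ p, D p * ⟪θ - θs, m p.1 - g p⟫ = 0 := by
    rw [← inner_zero_right (θ - θs), ← sum_smul_gibbs_mean_sub_eq_zero g D hθs]
    simp only [inner_sum, inner_smul_right, m]
  calc ∑ x, (∑ y, D (x, y)) * kl (gibbs (fun y => g (x, y)) θs) (gibbs (fun y => g (x, y)) θ)
      = ∑ p, D p * (A θ p.1 - A θs p.1 - ⟪θ - θs, m p.1⟫) := by
        simp only [kl_gibbs_gibbs, hmarginal, A, m]
    _ = ∑ p, D p * (A θ p.1 - A θs p.1 - ⟪θ - θs, g p⟫) - ∑ p, D p * ⟪θ - θs, m p.1 - g p⟫ := by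
        rw [← Finset.sum_sub_distrib]
        refine Finset.sum_congr rfl fun p _ => ?_
        rw [inner_sub_right]
        ring
    _ = sftLoss g D θ - sftLoss g D θs := by
        rw [hmoment, sub_zero, sftLoss, sftLoss, ← Finset.sum_sub_distrib]
        refine Finset.sum_congr rfl fun p _ => ?_
        rw [inner_sub_left]
        ring

end SFT

end

theorem stmt_17_general {X Y : Type*} [Fintype X] [Fintype Y] [Nonempty Y]
    {d : ℕ} (g : X × Y → EuclideanSpace ℝ (Fin d))
    (D : X × Y → ℝ)
    (μ : X → ℝ) (hμ : ∀ x, μ x = ∑ y, D (x, y))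
    (A : EuclideanSpace ℝ (Fin d) → X → ℝ)
    (hA : ∀ θ x, A θ x = Real.log (∑ y, Real.exp ⟪θ, g (x, y)⟫))
    (pol : EuclideanSpace ℝ (Fin d) → X → Y → ℝ)
    (hpol : ∀ θ x y, pol θ x y = Real.exp (⟪θ, g (x, y)⟫ - A θ x))
    (L : EuclideanSpace ℝ (Fin d) → ℝ)
    (hL : ∀ θ, L θ = ∑ p, D p * (A θ p.1 - ⟪θ, g p⟫))
    (θs : EuclideanSpace ℝ (Fin d)) (hθs : HasGradientAt L 0 θs)
    (KLobj : EuclideanSpace ℝ (Fin d) → ℝ)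
    (hKLobj : ∀ θ, KLobj θ
      = ∑ x, μ x * ∑ y, pol θs x y * Real.log (pol θs x y / pol θ x y)) :
    (∀ θ, KLobj θ = L θ - L θs)
    ∧ ∀ (r : X × Y → ℝ) (β : ℝ), 0 < β →
        ∀ Lro : EuclideanSpace ℝ (Fin d) → ℝ,
          (∀ θ, Lro θ = -(∑ x, μ x * ∑ y, pol θ x y * r (x, y))) →
          ((∀ θ, KLobj θ + (1 / β) * Lro θ = (L θ + (1 / β) * Lro θ) - L θs)
            ∧ ∀ θ₀, (∀ θ, KLobj θ₀ + (1 / β) * Lro θ₀ ≤ KLobj θ + (1 / β) * Lro θ)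
                ↔ (∀ θ, L θ₀ + (1 / β) * Lro θ₀ ≤ L θ + (1 / β) * Lro θ)) := by
  have hA' : A = fun θ x => logPartition (fun y => g (x, y)) θ := by
    funext θ x; exact hA θ x
  have hpol' : pol = fun θ x => gibbs (fun y => g (x, y)) θ := by
    funext θ x y; rw [hpol, hA']; rfl
  have hL' : L = sftLoss g D := by
    funext θ; rw [hL, hA']; rfl
  subst hA' hpol' hL'
  have hKL : ∀ θ, KLobj θ = sftLoss g D θ - sftLoss g D θs := fun θ => by
    rw [hKLobj, ← sum_marginal_mul_kl_eq_sftLoss_sub g D hθs θ]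
    simp only [hμ, kl]
  refine ⟨hKL, fun r β _ Lro _ => ⟨fun θ => by rw [hKL]; ring, fun θ₀ => ?_⟩⟩
  refine forall_congr' fun θ => ?_
  rw [hKL, hKL]
  constructor <;> intro h <;> linarith

/-- If `θ*` is a critical point of the SFT loss, then for every `θ`,
`E_{x∼μ}[KL(π_{θ*}(·|x) ‖ π_θ(·|x))] = L_sft(θ) − L_sft(θ*)`. Consequently, for any reward
`r` and `β > 0`, the KL-regularized objective and the multi-task objective differ by the
constant `−L_sft(θ*)` and hence have the same minimizers. -/
theorem stmt_17 {X Y : Type*} [Fintype X] [Fintype Y] [Nonempty X] [Nonempty Y]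
    {d : ℕ} (g : X × Y → EuclideanSpace ℝ (Fin d))
    (D : X × Y → ℝ) (hD0 : ∀ p, 0 ≤ D p) (hD1 : ∑ p, D p = 1)
    (μ : X → ℝ) (hμ : ∀ x, μ x = ∑ y, D (x, y))
    (A : EuclideanSpace ℝ (Fin d) → X → ℝ)
    (hA : ∀ θ x, A θ x = Real.log (∑ y, Real.exp ⟪θ, g (x, y)⟫))
    (pol : EuclideanSpace ℝ (Fin d) → X → Y → ℝ)
    (hpol : ∀ θ x y, pol θ x y = Real.exp (⟪θ, g (x, y)⟫ - A θ x))
    (L : EuclideanSpace ℝ (Fin d) → ℝ)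
    (hL : ∀ θ, L θ = ∑ p, D p * (A θ p.1 - ⟪θ, g p⟫))
    (θs : EuclideanSpace ℝ (Fin d)) (hθs : HasGradientAt L 0 θs)
    (KLobj : EuclideanSpace ℝ (Fin d) → ℝ)
    (hKLobj : ∀ θ, KLobj θ
      = ∑ x, μ x * ∑ y, pol θs x y * Real.log (pol θs x y / pol θ x y)) :
    (∀ θ, KLobj θ = L θ - L θs)
    ∧ ∀ (r : X × Y → ℝ) (β : ℝ), 0 < β →
        ∀ Lro : EuclideanSpace ℝ (Fin d) → ℝ,
          (∀ θ, Lro θ = -(∑ x, μ x * ∑ y, pol θ x y * r (x, y))) →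
          ((∀ θ, KLobj θ + (1 / β) * Lro θ = (L θ + (1 / β) * Lro θ) - L θs)
            ∧ ∀ θ₀, (∀ θ, KLobj θ₀ + (1 / β) * Lro θ₀ ≤ KLobj θ + (1 / β) * Lro θ)
                ↔ (∀ θ, L θ₀ + (1 / β) * Lro θ₀ ≤ L θ + (1 / β) * Lro θ)) :=
  stmt_17_general g D μ hμ A hA pol hpol L hL θs hθs KLobj hKLobj
end

section
/- Let μ be a probability measure on [0,1] with cumulative distribution function F(u) := μ[0,u], let λ be the uniform (Lebesgue) probability measure on [0,1], and let N ≥ 1. Then the probability that the maximum of N i.i.d. samples from μ strictly exceeds the maximum of N independent i.i.d. uniform samples satisfies μ^{⊗N} ⊗ λ^{⊗N}{((x₁,…,x_N),(u₁,…,u_N)) : max_i x_i > max_j u_j} = 1 − N·∫₀¹ F(u)^N · u^{N−1} du. -/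
/-!
Conditioning on the uniform samples with maximum `t`, the event fails exactly when all `N`
samples from `μ` lie in `(-∞, t]`, which has probability `F(t)^N`. The maximum of `N` uniform
samples has density `N t^(N-1)` on `(0, 1]`, so the probability is
`1 - ∫₀¹ F(t)^N N t^(N-1) dt`.
-/

open MeasureTheory Set
open scoped ENNReal

namespace MaxOfSamples

theorem measurable_iSup_apply {ι : Type*} [Countable ι] :
    Measurable fun x : ι → ℝ => ⨆ i, x i :=
  Measurable.iSup measurable_pi_apply

section iSup

variable {ι : Type*} [Fintype ι] [Nonempty ι]

theorem pi_setOf_iSup_le (μ : Measure ℝ) [SigmaFinite μ] (c : ℝ) :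
    (Measure.pi fun _ : ι => μ) {x | ⨆ i, x i ≤ c} = μ (Iic c) ^ Fintype.card ι := by
  have hpi : {x : ι → ℝ | ⨆ i, x i ≤ c} = univ.pi fun _ => Iic c := by
    ext x
    simp [ciSup_le_iff (finite_range x).bddAbove, Pi.le_def]
  rw [hpi, Measure.pi_pi, Finset.prod_const, Finset.card_univ]

theorem pi_setOf_lt_iSup (μ : Measure ℝ) [IsProbabilityMeasure μ] (c : ℝ) :
    (Measure.pi fun _ : ι => μ) {x | c < ⨆ i, x i} = 1 - μ (Iic c) ^ Fintype.card ι := by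
  have hcompl : {x : ι → ℝ | c < ⨆ i, x i} = {x | ⨆ i, x i ≤ c}ᶜ := by
    ext x; simp
  rw [hcompl, prob_compl_eq_one_sub (measurableSet_le measurable_iSup_apply measurable_const),
    pi_setOf_iSup_le]

theorem prod_setOf_iSup_lt_iSup {κ : Type*} [Countable κ] (μ : Measure ℝ)
    [IsProbabilityMeasure μ] (ρ : Measure (κ → ℝ)) [SFinite ρ] :
    ((Measure.pi fun _ : ι => μ).prod ρ) {p | ⨆ j, p.2 j < ⨆ i, p.1 i}
      = ∫⁻ t, 1 - μ (Iic t) ^ Fintype.card ι ∂(ρ.map fun u => ⨆ j, u j) := by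
  have hS : MeasurableSet {p : (ι → ℝ) × (κ → ℝ) | ⨆ j, p.2 j < ⨆ i, p.1 i} :=
    measurableSet_lt (measurable_iSup_apply.comp measurable_snd)
      (measurable_iSup_apply.comp measurable_fst)
  have hIic : Measurable fun t => μ (Iic t) :=
    Monotone.measurable fun _ _ h => measure_mono (Iic_subset_Iic.2 h)
  rw [Measure.prod_apply_symm hS, lintegral_map (f := fun t => 1 - μ (Iic t) ^ Fintype.card ι)
    (measurable_const.sub (hIic.pow_const _)) measurable_iSup_apply]
  exact lintegral_congr fun u => pi_setOf_lt_iSup (ι := ι) μ (⨆ j, u j)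

end iSup

theorem volume_restrict_unitInterval_Iic (a : ℝ) :
    volume.restrict (Icc (0 : ℝ) 1) (Iic a) = ENNReal.ofReal (min a 1) := by
  have : Iic a ∩ Icc (0 : ℝ) 1 = Icc 0 (min a 1) := by
    ext t; simp only [mem_inter_iff, mem_Iic, mem_Icc, le_min_iff]; tauto
  rw [Measure.restrict_apply measurableSet_Iic, this, Real.volume_Icc, sub_zero]

theorem lintegral_Ioc_ofReal_mul_pow {n : ℕ} (hn : n ≠ 0) (b : ℝ) :
    ∫⁻ t in Ioc 0 b, ENNReal.ofReal (n * t ^ (n - 1)) = ENNReal.ofReal b ^ n := by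
  rcases le_total b 0 with hb | hb
  · rw [Ioc_eq_empty (not_lt_of_ge hb), Measure.restrict_empty, lintegral_zero_measure,
      ENNReal.ofReal_eq_zero.2 hb, zero_pow hn]
  rw [← ofReal_integral_eq_lintegral_ofReal, ← intervalIntegral.integral_of_le hb,
    intervalIntegral.integral_const_mul, integral_pow, Nat.sub_add_cancel (Nat.pos_of_ne_zero hn),
    ← ENNReal.ofReal_pow hb]
  · congr 1
    have : (n : ℝ) ≠ 0 := Nat.cast_ne_zero.2 hn
    rw [zero_pow hn, sub_zero, Nat.cast_sub (Nat.pos_of_ne_zero hn), Nat.cast_one, sub_add_cancel]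
    field_simp
  · exact (continuous_const.mul (continuous_pow _)).integrableOn_Ioc
  · filter_upwards [ae_restrict_mem measurableSet_Ioc] with t ht
    have : 0 < t := ht.1
    positivity

theorem map_iSup_pi_unitInterval {ι : Type*} [Fintype ι] [Nonempty ι] :
    (Measure.pi fun _ : ι => volume.restrict (Icc (0 : ℝ) 1)).map (fun x => ⨆ i, x i)
      = (volume.restrict (Ioc 0 1)).withDensity
          fun t => ENNReal.ofReal (Fintype.card ι * t ^ (Fintype.card ι - 1)) := by
  have : IsProbabilityMeasure (volume.restrict (Icc (0 : ℝ) 1)) := ⟨by simp⟩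
  refine Measure.ext_of_Iic _ _ fun a => ?_
  rw [Measure.map_apply measurable_iSup_apply measurableSet_Iic,
    withDensity_apply _ measurableSet_Iic,
    Measure.restrict_restrict measurableSet_Iic, inter_comm, Ioc_inter_Iic, inf_comm,
    lintegral_Ioc_ofReal_mul_pow Fintype.card_ne_zero, ← volume_restrict_unitInterval_Iic]
  exact pi_setOf_iSup_le _ a

theorem measure_Iic_eq_measure_Icc_of_measure_Iio_eq_zero {μ : Measure ℝ} {a : ℝ}
    (h : μ (Iio a) = 0) (c : ℝ) : μ (Iic c) = μ (Icc a c) := by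
  rw [← measure_sdiff_null (s := Iic c) h]
  congr 1
  ext t
  simp

theorem toReal_lintegral_one_sub {α : Type*} [MeasurableSpace α] {P : Measure α}
    [IsProbabilityMeasure P] {g : α → ℝ≥0∞} (hg : Measurable g)
    (hg_le : ∀ x, g x ≤ 1) :
    (∫⁻ x, 1 - g x ∂P).toReal = 1 - (∫⁻ x, g x ∂P).toReal := by
  have hle : ∫⁻ x, g x ∂P ≤ 1 := (lintegral_mono hg_le).trans (by simp)
  rw [lintegral_sub hg (ne_top_of_le_ne_top ENNReal.one_ne_top hle) (ae_of_all _ hg_le),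
    lintegral_const, measure_univ, one_mul, ENNReal.toReal_sub_of_le hle ENNReal.one_ne_top,
    ENNReal.toReal_one]

end MaxOfSamples

open MaxOfSamples in
/-- Let `μ` be a probability measure on `[0,1]` with CDF `F(u) = μ[0,u]`,
and `λ` the uniform measure on `[0,1]`. The probability that the maximum of `N` i.i.d.
samples from `μ` strictly exceeds the maximum of `N` independent uniform samples equals
`1 − N·∫₀¹ F(u)^N u^{N−1} du`. -/
theorem stmt_18 (μ : Measure ℝ) [IsProbabilityMeasure μ]
    (hsupp : μ (Set.Icc (0 : ℝ) 1) = 1)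
    (F : ℝ → ℝ) (hF : ∀ u, F u = (μ (Set.Icc 0 u)).toReal)
    (N : ℕ) (hN : 1 ≤ N) :
    (((Measure.pi fun _ : Fin N => μ).prod
        (Measure.pi fun _ : Fin N => volume.restrict (Set.Icc (0 : ℝ) 1)))
        {p : (Fin N → ℝ) × (Fin N → ℝ) | (⨆ j, p.2 j) < ⨆ i, p.1 i}).toReal
      = 1 - N * ∫ u in (0 : ℝ)..1, F u ^ N * u ^ (N - 1) := by
  have : Nonempty (Fin N) := ⟨⟨0, hN⟩⟩
  have : IsProbabilityMeasure (volume.restrict (Icc (0 : ℝ) 1)) := ⟨by simp⟩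
  have := Measure.isProbabilityMeasure_map
    (μ := Measure.pi fun _ : Fin N => volume.restrict (Icc (0 : ℝ) 1))
    measurable_iSup_apply.aemeasurable
  set G : ℝ → ℝ≥0∞ := fun t => μ (Iic t) ^ N
  have hG : Measurable G :=
    (Monotone.measurable fun _ _ h => measure_mono (μ := μ) (Iic_subset_Iic.2 h)).pow_const N
  have hG_le : ∀ t, G t ≤ 1 := fun t => pow_le_one' prob_le_one N
  have hμ_neg : μ (Iio 0) = 0 :=
    measure_mono_null (t := (Icc 0 1)ᶜ) (fun _ ht hIcc => not_le_of_gt (mem_Iio.1 ht) hIcc.1)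
      ((prob_compl_eq_zero_iff measurableSet_Icc).2 hsupp)
  have hGF : ∀ t ∈ Ioc (0 : ℝ) 1,
      (ENNReal.ofReal (N * t ^ (N - 1)) * G t).toReal = N * (F t ^ N * t ^ (N - 1)) := by
    intro t ht
    rw [ENNReal.toReal_mul, ENNReal.toReal_ofReal (by have := ht.1; positivity),
      ENNReal.toReal_pow, measure_Iic_eq_measure_Icc_of_measure_Iio_eq_zero hμ_neg, ← hF]
    ring
  rw [prod_setOf_iSup_lt_iSup, Fintype.card_fin, toReal_lintegral_one_sub hG hG_le,
    map_iSup_pi_unitInterval, Fintype.card_fin,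
    lintegral_withDensity_eq_lintegral_mul _ (by fun_prop) hG]
  simp only [Pi.mul_apply]
  rw [← integral_toReal (by fun_prop) (ae_of_all _ fun t =>
      ENNReal.mul_lt_top ENNReal.ofReal_lt_top ((hG_le t).trans_lt ENNReal.one_lt_top)),
    intervalIntegral.integral_of_le zero_le_one, ← integral_const_mul]
  exact congrArg _ (setIntegral_congr_fun measurableSet_Ioc hGF)
end

section
/- Let μ be a probability measure on [0,1] with cumulative distribution function F(u) := μ[0,u], let λ be the uniform (Lebesgue) probability measure on [0,1], and let N ≥ 1. Then the probability that the minimum of N i.i.d. samples from μ strictly exceeds the minimum of N independent i.i.d. uniform samples satisfies μ^{⊗N} ⊗ λ^{⊗N}{((x₁,…,x_N),(u₁,…,u_N)) : min_i x_i > min_j u_j} = N·∫₀¹ (1 − F(u))^N · (1−u)^{N−1} du. -/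
/-!
Condition on the minimum `t` of the uniform samples: the samples from `μ` all exceed `t` with
probability `μ (t, ∞) ^ N`, which is `(1 - F t) ^ N` for `t ≥ 0` since `μ` lives on `[0, 1]`.
The minimum of `N` uniform samples has distribution function `1 - (1 - t) ^ N` on `[0, 1]`,
hence density `N (1 - t) ^ (N - 1)`.
-/

open MeasureTheory Set ENNReal

lemma integral_mul_one_sub_pow (n : ℕ) (a : ℝ) :
    ∫ t in (0 : ℝ)..a, n * (1 - t) ^ (n - 1) = 1 - (1 - a) ^ n := by
  have hderiv (t : ℝ) : HasDerivAt (fun s : ℝ => -(1 - s) ^ n) (n * (1 - t) ^ (n - 1)) t := by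
    simpa using (((hasDerivAt_id t).const_sub 1).fun_pow n).fun_neg
  rw [intervalIntegral.integral_eq_sub_of_hasDerivAt (fun t _ => hderiv t)
    (by apply Continuous.intervalIntegrable; fun_prop)]
  ring

lemma lintegral_Icc_mul_one_sub_pow (n : ℕ) {a : ℝ} (ha₀ : 0 ≤ a) (ha₁ : a ≤ 1) :
    ∫⁻ t in Icc 0 a, ENNReal.ofReal (n * (1 - t) ^ (n - 1))
      = ENNReal.ofReal (1 - (1 - a) ^ n) := by
  rw [← ofReal_integral_eq_lintegral_ofReal (Continuous.integrableOn_Icc (by fun_prop)),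
    integral_Icc_eq_integral_Ioc, ← intervalIntegral.integral_of_le ha₀,
    integral_mul_one_sub_pow]
  filter_upwards [ae_restrict_mem measurableSet_Icc] with t ht
  have : 0 ≤ 1 - t := by linarith [ht.2]
  positivity

instance : IsProbabilityMeasure (volume.restrict (Icc (0 : ℝ) 1)) :=
  ⟨by simp⟩

lemma measurable_measure_Ioi_pow (μ : Measure ℝ) (n : ℕ) :
    Measurable fun t => μ (Ioi t) ^ n :=
  (Antitone.measurable fun _ _ hst => measure_mono (Ioi_subset_Ioi hst)).pow_const n

lemma measureReal_Ioi_eq_one_sub_measureReal_Icc {μ : Measure ℝ} [IsProbabilityMeasure μ]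
    (hμ : μ (Iio 0) = 0) {t : ℝ} (ht : 0 ≤ t) : μ.real (Ioi t) = 1 - μ.real (Icc 0 t) := by
  have hIic : μ (Iic t) = μ (Icc 0 t) := by
    rw [← Iio_union_Icc_eq_Iic ht]
    exact measure_congr (union_ae_eq_right_of_ae_eq_empty (ae_eq_empty.mpr hμ))
  rw [← compl_Iic, probReal_compl_eq_one_sub measurableSet_Iic, measureReal_def, hIic,
    measureReal_def]

section MinOfSamples

variable {ι κ : Type*} [Fintype ι] [Fintype κ]

lemma measurable_iInf_pi : Measurable fun x : ι → ℝ => ⨅ i, x i :=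
  Measurable.iInf measurable_pi_apply

variable [Nonempty ι]

lemma lt_iInf_iff_of_fintype {x : ι → ℝ} {t : ℝ} : t < ⨅ i, x i ↔ ∀ i, t < x i := by
  refine ⟨fun h i => h.trans_le (ciInf_le (finite_range x).bddBelow i), fun h => ?_⟩
  obtain ⟨i, hi⟩ := exists_eq_ciInf_of_finite (f := x)
  exact hi ▸ h i

lemma setOf_lt_iInf_eq_pi (t : ℝ) :
    {x : ι → ℝ | t < ⨅ i, x i} = univ.pi fun _ => Ioi t := by
  ext x
  simp [lt_iInf_iff_of_fintype]

lemma pi_setOf_lt_iInf (μ : Measure ℝ) [SigmaFinite μ] (t : ℝ) :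
    Measure.pi (fun _ : ι => μ) {x | t < ⨅ i, x i} = μ (Ioi t) ^ Fintype.card ι := by
  rw [setOf_lt_iInf_eq_pi, Measure.pi_pi, Finset.prod_const, Finset.card_univ]

lemma prod_setOf_iInf_lt_iInf (μ ν : Measure ℝ) [SigmaFinite μ] [SigmaFinite ν] :
    ((Measure.pi fun _ : ι => μ).prod (Measure.pi fun _ : κ => ν))
        {p : (ι → ℝ) × (κ → ℝ) | (⨅ j, p.2 j) < ⨅ i, p.1 i}
      = ∫⁻ t, μ (Ioi t) ^ Fintype.card ι
          ∂(Measure.pi fun _ : κ => ν).map fun y => ⨅ j, y j := by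
  have hmeas : MeasurableSet {p : (ι → ℝ) × (κ → ℝ) | (⨅ j, p.2 j) < ⨅ i, p.1 i} :=
    measurableSet_lt (measurable_iInf_pi.comp measurable_snd)
      (measurable_iInf_pi.comp measurable_fst)
  rw [Measure.prod_apply_symm hmeas,
    lintegral_map (measurable_measure_Ioi_pow μ _) measurable_iInf_pi]
  refine lintegral_congr fun y => ?_
  simp only [preimage_ofPred_eq]
  exact pi_setOf_lt_iInf μ _

lemma map_iInf_pi_apply_Iic (ν : Measure ℝ) [IsProbabilityMeasure ν] (a : ℝ) :
    (Measure.pi fun _ : ι => ν).map (fun y => ⨅ j, y j) (Iic a)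
      = 1 - ν (Ioi a) ^ Fintype.card ι := by
  have hcompl : (fun y : ι → ℝ => ⨅ j, y j) ⁻¹' Iic a = {y | a < ⨅ j, y j}ᶜ := by
    ext y; simp
  rw [Measure.map_apply measurable_iInf_pi measurableSet_Iic, hcompl,
    prob_compl_eq_one_sub (measurableSet_lt measurable_const measurable_iInf_pi),
    pi_setOf_lt_iInf]

lemma map_iInf_pi_uniform :
    (Measure.pi fun _ : ι => volume.restrict (Icc (0 : ℝ) 1)).map (fun y => ⨅ j, y j)
      = (volume.restrict (Icc 0 1)).withDensity
          fun t => ENNReal.ofReal (Fintype.card ι * (1 - t) ^ (Fintype.card ι - 1)) := by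
  refine Measure.ext_of_Iic _ _ fun a => ?_
  rw [map_iInf_pi_apply_Iic, withDensity_apply _ measurableSet_Iic,
    Measure.restrict_restrict measurableSet_Iic, Measure.restrict_apply measurableSet_Ioi]
  rcases lt_or_ge a 0 with ha₀ | ha₀
  · have hIoi : Ioi a ∩ Icc (0 : ℝ) 1 = Icc 0 1 :=
      inter_eq_right.2 fun t ht => ha₀.trans_le ht.1
    have hIic : Iic a ∩ Icc (0 : ℝ) 1 = ∅ :=
      eq_empty_of_forall_notMem fun t ht => (ht.1.trans_lt ha₀).not_ge ht.2.1
    simp [hIoi, hIic]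
  rcases le_or_gt a 1 with ha₁ | ha₁
  · have hIoi : Ioi a ∩ Icc (0 : ℝ) 1 = Ioc a 1 := by
      ext t; simp only [mem_inter_iff, mem_Ioi, mem_Icc, mem_Ioc]; grind
    have hIic : Iic a ∩ Icc (0 : ℝ) 1 = Icc 0 a := by
      ext t; simp only [mem_inter_iff, mem_Iic, mem_Icc]; grind
    rw [hIoi, hIic, lintegral_Icc_mul_one_sub_pow _ ha₀ ha₁, Real.volume_Ioc,
      ← ENNReal.ofReal_pow (by linarith), ← ENNReal.ofReal_one,
      ← ENNReal.ofReal_sub _ (pow_nonneg (by linarith) _)]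
  · have hIoi : Ioi a ∩ Icc (0 : ℝ) 1 = ∅ :=
      eq_empty_of_forall_notMem fun t ht => (ha₁.trans ht.1).not_ge ht.2.2
    have hIic : Iic a ∩ Icc (0 : ℝ) 1 = Icc 0 1 :=
      inter_eq_right.2 fun t ht => ht.2.trans ha₁.le
    rw [hIoi, hIic, lintegral_Icc_mul_one_sub_pow _ zero_le_one le_rfl]
    simp [Fintype.card_ne_zero]

end MinOfSamples

/-- Let `μ` be a probability measure on `[0,1]` with CDF `F(u) = μ[0,u]`,
and `λ` the uniform measure on `[0,1]`. The probability that the minimum of `N` i.i.d.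
samples from `μ` strictly exceeds the minimum of `N` independent uniform samples equals
`N·∫₀¹ (1 − F(u))^N (1−u)^{N−1} du`. -/
theorem stmt_19 (μ : Measure ℝ) [IsProbabilityMeasure μ]
    (hsupp : μ (Set.Icc (0 : ℝ) 1) = 1)
    (F : ℝ → ℝ) (hF : ∀ u, F u = (μ (Set.Icc 0 u)).toReal)
    (N : ℕ) (hN : 1 ≤ N) :
    (((Measure.pi fun _ : Fin N => μ).prod
        (Measure.pi fun _ : Fin N => volume.restrict (Set.Icc (0 : ℝ) 1)))
        {p : (Fin N → ℝ) × (Fin N → ℝ) | (⨅ j, p.2 j) < ⨅ i, p.1 i}).toReal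
      = N * ∫ u in (0 : ℝ)..1, (1 - F u) ^ N * (1 - u) ^ (N - 1) := by
  have : Nonempty (Fin N) := ⟨⟨0, hN⟩⟩
  have hμ : μ (Iio 0) = 0 :=
    measure_mono_null (fun t (ht : t < 0) (hmem : t ∈ Icc 0 1) => ht.not_ge hmem.1)
      ((prob_compl_eq_zero_iff measurableSet_Icc).2 hsupp)
  have hdensity : Measurable fun t : ℝ => ENNReal.ofReal (N * (1 - t) ^ (N - 1)) := by
    fun_prop
  rw [prod_setOf_iInf_lt_iInf, map_iInf_pi_uniform, Fintype.card_fin,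
    lintegral_withDensity_eq_lintegral_mul _ hdensity (measurable_measure_Ioi_pow μ N),
    ← integral_toReal (hdensity.mul (measurable_measure_Ioi_pow μ N)).aemeasurable
      (ae_of_all _ fun t => mul_lt_top ofReal_lt_top (pow_lt_top (measure_lt_top μ _))),
    integral_Icc_eq_integral_Ioc, ← intervalIntegral.integral_of_le zero_le_one,
    ← intervalIntegral.integral_const_mul]
  refine intervalIntegral.integral_congr fun t ht => ?_
  rw [uIcc_of_le zero_le_one] at ht
  have : 0 ≤ 1 - t := by linarith [ht.2]
  have hd : 0 ≤ (N : ℝ) * (1 - t) ^ (N - 1) := by positivity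
  simp only [Pi.mul_apply, toReal_mul, toReal_pow, toReal_ofReal hd, ← measureReal_def,
    measureReal_Ioi_eq_one_sub_measureReal_Icc hμ ht.1, hF]
  ring
end
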